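/- Let Ã_{i,j}, B̃_{i,j} be vertices of Γ̃_n and write j = kn + r with k, r ∈ ℤ and 1 ≤ r ≤ n. Then for every h̃ ∈ MÖBIUS(τ̃_n, δ): if r > i then h̃(Ã_{i,j}), h̃(B̃_{i,j}) ∈ D_δ^{(2k−4)}, and if r ≤ i then h̃(Ã_{i,j}), h̃(B̃_{i,j}) ∈ D_δ^{(2k−5)}. -/

import Mathlib

open scoped Classical

/-! ## Common definitions: the plane `B`, honeycombs, and Möbius honeycombs.

Following Knutson–Tao "The honeycomb model of GL_n(C) tensor products I" and
Hwang "Saturation of Newell–Littlewood numbers" (arXiv:2409.00233). -/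

/-- Points of `ℝ³`, written as triples. -/
abbrev Pt : Type := ℝ × ℝ × ℝ

/-- The plane `B = {(x,y,z) ∈ ℝ³ : x + y + z = 0}`. -/
def planeB (p : Pt) : Prop := p.1 + p.2.1 + p.2.2 = 0

/-- The lattice points `B_ℤ = {(x,y,z) ∈ ℤ³ : x + y + z = 0}` of the plane `B`. -/
def latticeB (p : Pt) : Prop :=
  (∃ m : ℤ, p.1 = (m : ℝ)) ∧ (∃ m : ℤ, p.2.1 = (m : ℝ)) ∧ (∃ m : ℤ, p.2.2 = (m : ℝ)) ∧ planeB p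

/-- The two kinds of vertices of the graph `Γ_∞`: `Ã`-vertices and `B̃`-vertices. -/
inductive VK : Type
  | A | B
deriving DecidableEq

/-- Vertices `Ã_{i,j}`, `B̃_{i,j}` (for `i j : ℤ`) of the graph `Γ_∞`. -/
structure Vtx : Type where
  k : VK
  i : ℤ
  j : ℤ
deriving DecidableEq

/-- `AmbEdge t h d` holds when `(t, h)` is a directed edge of `Γ_∞` with direction
`d` under the direction map:  `(Ã_{i,j}, B̃_{i,j}) ↦ (-1,1,0)`,
`(Ã_{i,j}, B̃_{i-1,j}) ↦ (1,0,-1)`, `(Ã_{i,j}, B̃_{i-1,j-1}) ↦ (0,-1,1)`. -/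
inductive AmbEdge : Vtx → Vtx → Pt → Prop where
  | ne (i j : ℤ) : AmbEdge ⟨VK.A, i, j⟩ ⟨VK.B, i, j⟩ (-1, 1, 0)
  | sw (i j : ℤ) : AmbEdge ⟨VK.A, i, j⟩ ⟨VK.B, i - 1, j⟩ (1, 0, -1)
  | se (i j : ℤ) : AmbEdge ⟨VK.A, i, j⟩ ⟨VK.B, i - 1, j - 1⟩ (0, -1, 1)

/-! ### `GL_n` honeycombs and Littlewood–Richardson coefficients -/

/-- The vertex set of the graph `Δ_n` of the `GL_n` honeycomb tinkertoy `τ_n`: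
`Ã_{i,j}` for `1 ≤ i < j ≤ n` and `B̃_{i,j}` for `0 ≤ i < j ≤ n`. -/
def inDelta (n : ℕ) (v : Vtx) : Prop :=
  (v.k = VK.A ∧ 1 ≤ v.i ∧ v.i < v.j ∧ v.j ≤ (n : ℤ)) ∨
  (v.k = VK.B ∧ 0 ≤ v.i ∧ v.i < v.j ∧ v.j ≤ (n : ℤ))

/-- A honeycomb: a configuration of the `GL_n` honeycomb tinkertoy `τ_n`, i.e. a map
from the vertices of `Δ_n` to the plane `B` such that along every edge `e` the
difference `h(head e) - h(tail e)` is a nonnegative multiple of the direction `d(e)`.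
(We normalize such maps to vanish off `Δ_n` so that they faithfully encode maps
`V_{Δ_n} → B`.) -/
def IsHoneycomb (n : ℕ) (f : Vtx → Pt) : Prop :=
  (∀ v, inDelta n v → planeB (f v)) ∧
  (∀ t h d, AmbEdge t h d → inDelta n t → inDelta n h →
    ∃ a : ℝ, 0 ≤ a ∧ f h - f t = a • d) ∧
  (∀ v, ¬ inDelta n v → f v = 0)

/-- The Littlewood–Richardson coefficient `c^λ_{μ,ν}` (the multiplicity of `V_λ` in
`V_μ ⊗ V_ν` for polynomial `GL_n(ℂ)`-representations), realized via the
Knutson–Tao honeycomb model: the number of lattice honeycombs with boundary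
`∂h = (μ^*, ν^*, λ)`, where `μ^* = (-μ_n, …, -μ_1)` and the boundary coordinates are:
`λ_i` is the `x`-coordinate of `h(B̃_{i-1,n})`, `μ_i` the `y`-coordinate of
`h(B̃_{n-i,n-i+1})`, `ν_i` the `z`-coordinate of `h(B̃_{0,i})` (`1 ≤ i ≤ n`). -/
noncomputable def lrCoef (n : ℕ) (lam mu nu : Fin n → ℤ) : ℕ :=
  Nat.card {f : Vtx → Pt // IsHoneycomb n f ∧
    (∀ i : Fin n, (f ⟨VK.B, (i : ℤ), (n : ℤ)⟩).1 = ((-(mu i.rev) : ℤ) : ℝ)) ∧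
    (∀ i : Fin n, (f ⟨VK.B, (n : ℤ) - (i : ℤ) - 1, (n : ℤ) - (i : ℤ)⟩).2.1
      = ((-(nu i.rev) : ℤ) : ℝ)) ∧
    (∀ i : Fin n, (f ⟨VK.B, 0, (i : ℤ) + 1⟩).2.2 = ((lam i : ℤ) : ℝ)) ∧
    (∀ v, inDelta n v → latticeB (f v))}

/-- `lam ∈ Par_n`: a weakly decreasing sequence of nonnegative integers. -/
def IsPartition (n : ℕ) (lam : Fin n → ℤ) : Prop :=
  (∀ i j : Fin n, i ≤ j → lam j ≤ lam i) ∧ ∀ i, 0 ≤ lam i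

/-- The Newell–Littlewood number
`N_{λ,μ,ν} = ∑_{α,β,γ ∈ Par_n} c^λ_{β,γ} c^μ_{γ,α} c^ν_{α,β}`. -/
noncomputable def nlNum (n : ℕ) (lam mu nu : Fin n → ℤ) : ℕ :=
  ∑ᶠ (a : Fin n → ℤ), ∑ᶠ (b : Fin n → ℤ), ∑ᶠ (c : Fin n → ℤ),
    if IsPartition n a ∧ IsPartition n b ∧ IsPartition n c then
      lrCoef n lam b c * lrCoef n mu c a * lrCoef n nu a b
    else 0

/-! ### Möbius honeycombs -/

/-- The vertex set of the graph `Γ̃_n`: all `Ã_{i,j}`, `B̃_{i,j}` with `0 ≤ i ≤ n`. -/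
def inGamma (n : ℕ) (v : Vtx) : Prop := 0 ≤ v.i ∧ v.i ≤ (n : ℤ)

/-- The generating relation of the vertex equivalence `∼` on `Γ̃_n`:
`Ã_{i,j} ∼ B̃_{n-i, j-i+2n}` and `B̃_{i,j} ∼ Ã_{n-i, j-i+2n}`. -/
def vBase (n : ℕ) (v w : Vtx) : Prop :=
  (v.k = VK.A ∧ w = ⟨VK.B, (n : ℤ) - v.i, v.j - v.i + 2 * (n : ℤ)⟩) ∨
  (v.k = VK.B ∧ w = ⟨VK.A, (n : ℤ) - v.i, v.j - v.i + 2 * (n : ℤ)⟩)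

/-- The vertex equivalence relation `∼` on the vertices of `Γ̃_n`. -/
def vEquiv (n : ℕ) : Vtx → Vtx → Prop := Relation.EqvGen (vBase n)

/-- The generating relation of the equivalence `∼` on the plane `B` (parameter `δ`):
`(x,y,z) ∼ (y-2δ, x-δ, z+3δ)`. -/
def pBase (δ : ℝ) (p q : Pt) : Prop := q = (p.2.1 - 2 * δ, p.1 - δ, p.2.2 + 3 * δ)

/-- The equivalence relation `∼` on the plane `B` (parameter `δ`). -/
def pEquiv (δ : ℝ) : Pt → Pt → Prop := Relation.EqvGen (pBase δ)

/-- A Möbius honeycomb for the parameter `δ`: a configuration of the Möbius honeycomb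
tinkertoy `τ̃_n` (condition MH1), satisfying the boundary conditions (MH2) and the
equivariance condition (MH3).  (We normalize the map to vanish off `Γ̃_n` so that it
faithfully encodes a map `V_{Γ̃_n} → B`.) -/
def IsMobius (n : ℕ) (δ : ℝ) (f : Vtx → Pt) : Prop :=
  -- the image lies in the plane B
  (∀ v, inGamma n v → planeB (f v)) ∧
  -- (MH1) configuration condition
  (∀ t h d, AmbEdge t h d → inGamma n t → inGamma n h →
    ∃ a : ℝ, 0 ≤ a ∧ f h - f t = a • d) ∧
  -- (MH2) boundary conditions
  (∀ j : ℤ, 1 ≤ j → j ≤ (n : ℤ) → ∃ ξ : ℝ, 4 * δ ≤ ξ ∧ ξ ≤ 5 * δ ∧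
    f ⟨VK.A, 0, j⟩ = (-(2 * δ), 2 * δ - ξ, ξ)) ∧
  (∀ j : ℤ, (n : ℤ) + 1 ≤ j → j ≤ 2 * (n : ℤ) → ∃ ξ : ℝ, 2 * δ ≤ ξ ∧ ξ ≤ 3 * δ ∧
    f ⟨VK.A, 0, j⟩ = (-δ, δ - ξ, ξ)) ∧
  (∀ j : ℤ, 2 * (n : ℤ) + 1 ≤ j → j ≤ 3 * (n : ℤ) → ∃ ξ : ℝ, 0 ≤ ξ ∧ ξ ≤ δ ∧
    f ⟨VK.A, 0, j⟩ = (0, -ξ, ξ)) ∧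
  -- (MH3) equivariance
  (∀ v w, inGamma n v → inGamma n w → vEquiv n v w → pEquiv δ (f v) (f w)) ∧
  -- normalization off Γ̃_n
  (∀ v, ¬ inGamma n v → f v = 0)

/-- `MBdryEq n f ξ` says that the boundary `∂f` of the Möbius honeycomb `f` equals
`(ξ_1, …, ξ_{3n})`:  `ξ_j` is the `z`-coordinate of `f(Ã_{0,j})`. -/
def MBdryEq (n : ℕ) (f : Vtx → Pt) (ξ : Fin (3 * n) → ℝ) : Prop :=
  ∀ j : Fin (3 * n), (f ⟨VK.A, 0, (j : ℤ) + 1⟩).2.2 = ξ j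

/-! ### Edges of `Γ̃_n`, constant coordinates, lengths, perimeters -/

/-- The three kinds of edges of `Γ_∞` (labelled by the tail `Ã`-vertex). -/
inductive EK : Type
  | ne | sw | se
deriving DecidableEq

/-- An edge of `Γ_∞`, recorded by its kind and its tail `Ã_{i,j}`. -/
structure Edg : Type where
  k : EK
  i : ℤ
  j : ℤ
deriving DecidableEq

/-- The tail of an edge. -/
def Edg.tl (e : Edg) : Vtx := ⟨VK.A, e.i, e.j⟩

/-- The head of an edge. -/
def Edg.hd (e : Edg) : Vtx :=
  match e.k with
  | EK.ne => ⟨VK.B, e.i, e.j⟩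
  | EK.sw => ⟨VK.B, e.i - 1, e.j⟩
  | EK.se => ⟨VK.B, e.i - 1, e.j - 1⟩

/-- The direction of an edge. -/
def Edg.dir (e : Edg) : Pt :=
  match e.k with
  | EK.ne => (-1, 1, 0)
  | EK.sw => (1, 0, -1)
  | EK.se => (0, -1, 1)

/-- The edge belongs to `Γ̃_n` (both endpoints do). -/
def edgValid (n : ℕ) (e : Edg) : Prop := inGamma n e.tl ∧ inGamma n e.hd

/-- Edge equivalence `≡` on the edges of `Γ̃_n`: the endpoint pairs correspond under
the vertex equivalence `∼`, in either order.  Equivalent edges have the same image in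
the quotient graph `Γ_n`. -/
def edgEquiv (n : ℕ) (e e' : Edg) : Prop :=
  (vEquiv n e.tl e'.tl ∧ vEquiv n e.hd e'.hd) ∨
  (vEquiv n e.tl e'.hd ∧ vEquiv n e.hd e'.tl)

/-- The constant coordinate `const(f; e)` of the line containing the image of the
edge `e`: the `x`-coordinate if `d(e) = (0,-1,1)`, the `y`-coordinate if
`d(e) = (1,0,-1)`, the `z`-coordinate if `d(e) = (-1,1,0)`. -/
def constOf (f : Vtx → Pt) (e : Edg) : ℝ :=
  match e.k with
  | EK.ne => (f e.tl).2.2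
  | EK.sw => (f e.tl).2.1
  | EK.se => (f e.tl).1

/-- The length `length(f; e)` of the image of the edge `e`, in the normalized metric
`l((x,y,z), (x',y',z')) = (1/√2)·√((x-x')² + (y-y')² + (z-z')²)` on the plane `B`. -/
noncomputable def lengthOf (f : Vtx → Pt) (e : Edg) : ℝ :=
  (1 / Real.sqrt 2) *
    Real.sqrt (((f e.hd).1 - (f e.tl).1) ^ 2 + ((f e.hd).2.1 - (f e.tl).2.1) ^ 2 +
      ((f e.hd).2.2 - (f e.tl).2.2) ^ 2)

/-- The perimeter `perimeter(f; α̃_{i,j})` of the hexagon `α̃_{i,j}`: the sum of the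
lengths of its six surrounding edges. -/
noncomputable def perim (f : Vtx → Pt) (i j : ℤ) : ℝ :=
  lengthOf f ⟨EK.ne, i, j⟩ + lengthOf f ⟨EK.se, i + 1, j + 1⟩ +
    lengthOf f ⟨EK.sw, i + 1, j + 1⟩ + lengthOf f ⟨EK.ne, i, j + 1⟩ +
    lengthOf f ⟨EK.se, i, j + 1⟩ + lengthOf f ⟨EK.sw, i, j⟩

/-! ### Hexagons of `Γ_n`, weights, weighted perimeters, largest-lifts -/

/-- The index set `{(i,j) : 1 ≤ i ≤ n-1, 1 ≤ j ≤ n+i}` of the hexagons of `Γ_n`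
(a fundamental domain for the hexagons of `Γ̃_n` modulo equivalence). -/
noncomputable def hexFinset (n : ℕ) : Finset (ℤ × ℤ) :=
  ((Finset.Icc 1 ((n : ℤ) - 1)) ×ˢ (Finset.Icc 1 (2 * (n : ℤ) - 1))).filter
    (fun p => p.2 ≤ (n : ℤ) + p.1)

/-- The generating relation of hexagon equivalence: `α̃_{i,j} ∼ α̃_{n-i, j-i+2n}`. -/
def hexBase (n : ℕ) (p q : ℤ × ℤ) : Prop := q = ((n : ℤ) - p.1, p.2 - p.1 + 2 * (n : ℤ))

/-- Hexagon equivalence: hexagons of `Γ̃_n` with the same image in `Γ_n`. -/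
def hexEquiv (n : ℕ) : ℤ × ℤ → ℤ × ℤ → Prop := Relation.EqvGen (hexBase n)

/-- Two hexagons of `Γ̃_n` sharing an edge. -/
def hexNbr (p q : ℤ × ℤ) : Prop :=
  q = (p.1, p.2 + 1) ∨ q = (p.1, p.2 - 1) ∨ q = (p.1 + 1, p.2) ∨ q = (p.1 - 1, p.2) ∨
    q = (p.1 + 1, p.2 + 1) ∨ q = (p.1 - 1, p.2 - 1)

/-- The hexagon index is in the range `1 ≤ i ≤ n-1` of hexagons of `Γ̃_n`. -/
def hexInRange (n : ℕ) (p : ℤ × ℤ) : Prop := 1 ≤ p.1 ∧ p.1 ≤ (n : ℤ) - 1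

/-- Adjacency of hexagons of the quotient graph `Γ_n`:
some representatives share an edge in `Γ̃_n`. -/
def hexAdjQ (n : ℕ) (p q : ℤ × ℤ) : Prop :=
  ∃ p' q', hexInRange n p' ∧ hexInRange n q' ∧ hexEquiv n p p' ∧ hexEquiv n q q' ∧ hexNbr p' q'

/-- The weighted perimeter `wperim(f) = ∑_{α ∈ H_{Γ_n}} w(α) · perimeter(f; α̃)`. -/
noncomputable def wperimOf (n : ℕ) (w : ℤ × ℤ → ℝ) (f : Vtx → Pt) : ℝ :=
  ∑ p ∈ hexFinset n, w p * perim f p.1 p.2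

/-- A weight function on the hexagons of `Γ_n` (encoded on hexagon indices, constant
on equivalence classes) such that each value is strictly greater than one sixth of the
sum of the values at the adjacent hexagons of `Γ_n`. -/
def GoodWeight (n : ℕ) (w : ℤ × ℤ → ℝ) : Prop :=
  (∀ p q, hexEquiv n p q → w p = w q) ∧
  ∀ p ∈ hexFinset n,
    (1 / 6 : ℝ) *
        ∑ q ∈ (hexFinset n).filter (fun q => hexAdjQ n p q ∧ ¬ hexEquiv n p q), w q
      < w p

/-- `f` is a largest-lift of `ξ`:  `f ∈ MÖBIUS(τ̃_n, δ)`, `∂f = ξ`, and for some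
weight function `w` as in \eqref{eqn4.6}, `f` strictly maximizes the weighted
perimeter among Möbius honeycombs with boundary `ξ`. -/
def IsLargestLift (n : ℕ) (δ : ℝ) (ξ : Fin (3 * n) → ℝ) (f : Vtx → Pt) : Prop :=
  IsMobius n δ f ∧ MBdryEq n f ξ ∧
  ∃ w : ℤ × ℤ → ℝ, GoodWeight n w ∧
    ∀ g : Vtx → Pt, IsMobius n δ g → MBdryEq n g ξ → g ≠ f →
      wperimOf n w g < wperimOf n w f

/-- The rhombus `D_δ^{(c)} ⊆ B`:  for `c = 2k`,
`{(x,y,z) ∈ B : (k-1)δ ≤ x ≤ kδ, (k-1)δ ≤ y ≤ kδ}`, and for `c = 2k+1`,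
`{(x,y,z) ∈ B : (k-1)δ ≤ x ≤ kδ, kδ ≤ y ≤ (k+1)δ}`. -/
def Dreg (δ : ℝ) (c : ℤ) (p : Pt) : Prop :=
  planeB p ∧
  ∃ k : ℤ, (c = 2 * k ∧ ((k : ℝ) - 1) * δ ≤ p.1 ∧ p.1 ≤ (k : ℝ) * δ ∧
      ((k : ℝ) - 1) * δ ≤ p.2.1 ∧ p.2.1 ≤ (k : ℝ) * δ) ∨
    (c = 2 * k + 1 ∧ ((k : ℝ) - 1) * δ ≤ p.1 ∧ p.1 ≤ (k : ℝ) * δ ∧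
      (k : ℝ) * δ ≤ p.2.1 ∧ p.2.1 ≤ ((k : ℝ) + 1) * δ)

/-!
Write `T (x, y, z) = (y - 2δ, x - δ, z + 3δ)`, so that `p ∼ q` means `q = T^m p` for some
`m ∈ ℤ`. The bottom row `Ã_{0,s}` and the top row `B̃_{n,s}` of the strip are glued to each other
(`Ã_{0,s} ∼ B̃_{n,s+2n}` and `B̃_{n,s} ∼ Ã_{0,s+n}`), while the configuration condition makes the
coordinates monotone across the strip, so that the position of one row confines the other row to
a quadrant. A point on a known edge segment has a single power of `T` landing in such a quadrant,
apart from borderline coincidences of two glued points, which leave no room for a neighbouring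
row vertex.
Starting from (MH2) on `1 ≤ s ≤ 3n`, this pins both rows down block after block, in both
directions: for `s` in block `k`, `Ã_{0,s}` lies on the right edge of `D^{(2k-4)}` and `B̃_{n,s}`
on the top edge of `D^{(2k-5)}`. Monotone chains through the strip then trap every vertex between
the two rows.
-/

namespace MobiusHoneycomb

lemma int_le_of_mul_le_mul {δ : ℝ} (hδ : 0 < δ) {a b : ℤ} (h : (a : ℝ) * δ ≤ b * δ) : a ≤ b := by
  exact_mod_cast le_of_mul_le_mul_right h hδ

/-- The first two coordinates of `T^(2l) p` and of `T^(2l+1) p`, for `p = (px, py, _)`. -/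
def OrbitXY (δ px py qx qy : ℝ) : Prop :=
  ∃ l : ℤ, (qx = px - 3 * l * δ ∧ qy = py - 3 * l * δ) ∨
    (qx = py - (3 * l + 2) * δ ∧ qy = px - (3 * l + 1) * δ)

def TImage (δ px py qx qy : ℝ) : Prop := qx = py - 2 * δ ∧ qy = px - δ

lemma orbitXY_of_pEquiv {δ : ℝ} {p q : Pt} (h : pEquiv δ p q) :
    OrbitXY δ p.1 p.2.1 q.1 q.2.1 := by
  induction h with
  | rel x y hxy =>
      exact ⟨0, Or.inr (by rw [hxy]; simp)⟩
  | refl x => exact ⟨0, Or.inl ⟨by ring, by ring⟩⟩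
  | symm x y h ih =>
      obtain ⟨l, hl | hl⟩ := ih
      · exact ⟨-l, Or.inl ⟨by rw [hl.1]; push_cast; ring, by rw [hl.2]; push_cast; ring⟩⟩
      · exact ⟨-1 - l, Or.inr ⟨by rw [hl.2]; push_cast; ring, by rw [hl.1]; push_cast; ring⟩⟩
  | trans x y z h1 h2 ih1 ih2 =>
      obtain ⟨l1, hl1 | hl1⟩ := ih1 <;> obtain ⟨l2, hl2 | hl2⟩ := ih2
      · exact ⟨l1 + l2, Or.inl ⟨by rw [hl2.1, hl1.1]; push_cast; ring,
          by rw [hl2.2, hl1.2]; push_cast; ring⟩⟩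
      · exact ⟨l1 + l2, Or.inr ⟨by rw [hl2.1, hl1.2]; push_cast; ring,
          by rw [hl2.2, hl1.1]; push_cast; ring⟩⟩
      · exact ⟨l1 + l2, Or.inr ⟨by rw [hl2.1, hl1.1]; push_cast; ring,
          by rw [hl2.2, hl1.2]; push_cast; ring⟩⟩
      · exact ⟨l1 + l2 + 1, Or.inl ⟨by rw [hl2.1, hl1.2]; push_cast; ring,
          by rw [hl2.2, hl1.1]; push_cast; ring⟩⟩

/-- The right edge of `D_δ^{(2k-4)}`, which carries `Ã_{0,s}` for `s` in block `k`; `RowBSeg δ k`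
is the top edge of `D_δ^{(2k-5)}`, which carries `B̃_{n,s}`. -/
def RowASeg (δ k x y : ℝ) : Prop := x = (k - 2) * δ ∧ (k - 3) * δ ≤ y ∧ y ≤ (k - 2) * δ

def RowBSeg (δ k x y : ℝ) : Prop := (k - 4) * δ ≤ x ∧ x ≤ (k - 3) * δ ∧ y = (k - 2) * δ

section Pinning

variable {δ K rx ry wx wy : ℝ} (hδ : 0 < δ)
include hδ

lemma tImage_of_orbitXY_rowASeg (hr : RowASeg δ K rx ry) (hwx : wx ≤ (K - 3) * δ)
    (hwy : (K - 4) * δ ≤ wy) (h : OrbitXY δ rx ry wx wy) : TImage δ rx ry wx wy := by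
  obtain ⟨hrx, hry₁, hry₂⟩ := hr
  obtain ⟨l, ⟨h₁, h₂⟩ | ⟨h₁, h₂⟩⟩ := h
  · have : (1 : ℤ) ≤ 3 * l := int_le_of_mul_le_mul hδ (by push_cast; linarith)
    have : 3 * l ≤ (2 : ℤ) := int_le_of_mul_le_mul hδ (by push_cast; linarith)
    omega
  · have : (-2 : ℤ) ≤ 3 * l := int_le_of_mul_le_mul hδ (by push_cast; linarith)
    have : 3 * l ≤ (1 : ℤ) := int_le_of_mul_le_mul hδ (by push_cast; linarith)
    obtain rfl : l = 0 := by omega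
    constructor <;> push_cast at h₁ h₂ <;> linarith

lemma tImage_or_eq_of_orbitXY_rowASeg (hr : RowASeg δ K rx ry) (hwx : wx ≤ (K - 1) * δ)
    (hwy : (K - 2) * δ ≤ wy) (h : OrbitXY δ rx ry wx wy) :
    TImage δ wx wy rx ry ∨ (wx = rx ∧ wy = ry) := by
  obtain ⟨hrx, hry₁, hry₂⟩ := hr
  obtain ⟨l, ⟨h₁, h₂⟩ | ⟨h₁, h₂⟩⟩ := h
  · have : (-1 : ℤ) ≤ 3 * l := int_le_of_mul_le_mul hδ (by push_cast; linarith)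
    have : 3 * l ≤ (0 : ℤ) := int_le_of_mul_le_mul hδ (by push_cast; linarith)
    obtain rfl : l = 0 := by omega
    right
    constructor <;> push_cast at h₁ h₂ <;> linarith
  · have : (-4 : ℤ) ≤ 3 * l := int_le_of_mul_le_mul hδ (by push_cast; linarith)
    have : 3 * l ≤ (-1 : ℤ) := int_le_of_mul_le_mul hδ (by push_cast; linarith)
    obtain rfl : l = -1 := by omega
    left
    constructor <;> push_cast at h₁ h₂ <;> linarith

lemma tImage_or_eq_of_orbitXY_rowBSeg (hw : RowBSeg δ K wx wy) (hrx : (K - 3) * δ ≤ rx)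
    (hry : ry ≤ (K - 1) * δ) (h : OrbitXY δ wx wy rx ry) :
    TImage δ rx ry wx wy ∨ (rx = wx ∧ ry = wy) := by
  obtain ⟨hwx₁, hwx₂, hwy⟩ := hw
  obtain ⟨l, ⟨h₁, h₂⟩ | ⟨h₁, h₂⟩⟩ := h
  · have : (-1 : ℤ) ≤ 3 * l := int_le_of_mul_le_mul hδ (by push_cast; linarith)
    have : 3 * l ≤ (0 : ℤ) := int_le_of_mul_le_mul hδ (by push_cast; linarith)
    obtain rfl : l = 0 := by omega
    right
    constructor <;> push_cast at h₁ h₂ <;> linarith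
  · have : (-4 : ℤ) ≤ 3 * l := int_le_of_mul_le_mul hδ (by push_cast; linarith)
    have : 3 * l ≤ (-1 : ℤ) := int_le_of_mul_le_mul hδ (by push_cast; linarith)
    obtain rfl : l = -1 := by omega
    left
    constructor <;> push_cast at h₁ h₂ <;> linarith

lemma tImage_of_orbitXY_rowBSeg (hw : RowBSeg δ K wx wy) (hrx : (K - 5) * δ ≤ rx)
    (hry : ry ≤ (K - 3) * δ) (h : OrbitXY δ wx wy rx ry) : TImage δ wx wy rx ry := by
  obtain ⟨hwx₁, hwx₂, hwy⟩ := hw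
  obtain ⟨l, ⟨h₁, h₂⟩ | ⟨h₁, h₂⟩⟩ := h
  · have : (1 : ℤ) ≤ 3 * l := int_le_of_mul_le_mul hδ (by push_cast; linarith)
    have : 3 * l ≤ (2 : ℤ) := int_le_of_mul_le_mul hδ (by push_cast; linarith)
    omega
  · have : (-2 : ℤ) ≤ 3 * l := int_le_of_mul_le_mul hδ (by push_cast; linarith)
    have : 3 * l ≤ (1 : ℤ) := int_le_of_mul_le_mul hδ (by push_cast; linarith)
    obtain rfl : l = 0 := by omega
    constructor <;> push_cast at h₁ h₂ <;> linarith

/-- `T^m` lowers `x + y` by `3mδ`, so the sum alone determines the power. -/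
lemma tImage_of_orbitXY_of_add_eq {px py qx qy : ℝ} (hsum : qx + qy = px + py + 3 * δ)
    (h : OrbitXY δ px py qx qy) : TImage δ qx qy px py := by
  obtain ⟨l, ⟨h₁, h₂⟩ | ⟨h₁, h₂⟩⟩ := h
  · have : -2 * l = (1 : ℤ) := by
      exact_mod_cast mul_right_cancel₀ hδ.ne' (by linarith : (-2 * l : ℝ) * δ = 1 * δ)
    omega
  · have : -2 * l - 1 = (1 : ℤ) := by
      exact_mod_cast mul_right_cancel₀ hδ.ne'
        (by linarith : (-2 * l - 1 : ℝ) * δ = 1 * δ)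
    obtain rfl : l = -1 := by omega
    constructor <;> push_cast at h₁ h₂ <;> linarith

end Pinning

def Ax (f : Vtx → Pt) (i j : ℤ) : ℝ := (f ⟨VK.A, i, j⟩).1
def Ay (f : Vtx → Pt) (i j : ℤ) : ℝ := (f ⟨VK.A, i, j⟩).2.1
def Bx (f : Vtx → Pt) (i j : ℤ) : ℝ := (f ⟨VK.B, i, j⟩).1
def By (f : Vtx → Pt) (i j : ℤ) : ℝ := (f ⟨VK.B, i, j⟩).2.1

def WrapEq (n : ℕ) (δ : ℝ) (f : Vtx → Pt) (m : ℤ) : Prop :=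
  TImage δ (Ax f 0 m) (Ay f 0 m) (Bx f n (m - n)) (By f n (m - n))

section Configuration

variable {n : ℕ} {δ : ℝ} {f : Vtx → Pt} {i i' j j' s t : ℤ} (hf : IsMobius n δ f)
include hf

lemma edge_xy {v w : Vtx} {d : Pt} (he : AmbEdge v w d) (hv : inGamma n v) (hw : inGamma n w) :
    ∃ a : ℝ, 0 ≤ a ∧ (f w).1 = (f v).1 + a * d.1 ∧ (f w).2.1 = (f v).2.1 + a * d.2.1 := by
  obtain ⟨a, ha, h⟩ := hf.2.1 v w d he hv hw
  refine ⟨a, ha, ?_, ?_⟩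
  · have := congrArg Prod.fst h
    simp only [Prod.fst_sub, Prod.smul_fst, smul_eq_mul] at this
    linarith
  · have := congrArg (fun p : Pt => p.2.1) h
    simp only [Prod.snd_sub, Prod.fst_sub, Prod.smul_snd, Prod.smul_fst, smul_eq_mul] at this
    linarith

lemma edge_ne (h0 : 0 ≤ i) (h1 : i ≤ n) :
    Bx f i j ≤ Ax f i j ∧ Ay f i j ≤ By f i j ∧ Bx f i j + By f i j = Ax f i j + Ay f i j := by
  obtain ⟨a, ha, hx, hy⟩ := edge_xy hf (AmbEdge.ne i j) ⟨h0, h1⟩ ⟨h0, h1⟩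
  simp only at hx hy
  unfold Ax Ay Bx By
  exact ⟨by linarith, by linarith, by linarith⟩

lemma edge_sw (h0 : 0 ≤ i) (h1 : i + 1 ≤ n) :
    Ax f (i + 1) j ≤ Bx f i j ∧ By f i j = Ay f (i + 1) j := by
  obtain ⟨a, ha, hx, hy⟩ :=
    edge_xy hf (AmbEdge.sw (i + 1) j) (by simp [inGamma]; omega) (by simp [inGamma]; omega)
  simp only [add_sub_cancel_right] at hx hy
  unfold Ax Ay Bx By
  exact ⟨by linarith, by linarith⟩

lemma edge_se (h0 : 0 ≤ i) (h1 : i + 1 ≤ n) :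
    Bx f i j = Ax f (i + 1) (j + 1) ∧ By f i j ≤ Ay f (i + 1) (j + 1) := by
  obtain ⟨a, ha, hx, hy⟩ :=
    edge_xy hf (AmbEdge.se (i + 1) (j + 1)) (by simp [inGamma]; omega)
      (by simp [inGamma]; omega)
  simp only [add_sub_cancel_right] at hx hy
  unfold Ax Ay Bx By
  exact ⟨by linarith, by linarith⟩

lemma Ax_up_le (h0 : 0 ≤ i) (hii : i ≤ i') (hi' : i' ≤ n) : Ax f i' j ≤ Ax f i j := by
  induction i', hii using Int.leInduction with
  | base => exact le_rfl
  | succ t ht ih =>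
    exact ((edge_sw hf (by omega) hi').1.trans (edge_ne hf (by omega) (by omega)).1).trans
      (ih (by omega))

lemma Ax_diag_le (h0 : 0 ≤ i) (hii : i ≤ i') (hi' : i' ≤ n) :
    Ax f i' (j + (i' - i)) ≤ Ax f i j := by
  induction i', hii using Int.leInduction with
  | base => simp
  | succ t ht ih =>
    rw [show j + (t + 1 - i) = j + (t - i) + 1 by ring, ← (edge_se hf (by omega) hi').1]
    exact (edge_ne hf (by omega) (by omega)).1.trans (ih (by omega))

lemma Ax_cone_le (h0 : 0 ≤ i) (hj : j ≤ j') (hj' : j' - j ≤ i' - i) (hi' : i' ≤ n) :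
    Ax f i' j' ≤ Ax f i j := by
  calc Ax f i' j' ≤ Ax f (i + (j' - j)) j' := Ax_up_le hf (by omega) (by omega) hi'
    _ = Ax f (i + (j' - j)) (j + (i + (j' - j) - i)) := by ring_nf
    _ ≤ Ax f i j := Ax_diag_le hf h0 (by omega) (by omega)

lemma Ay_le_up (h0 : 0 ≤ i) (hii : i ≤ i') (hi' : i' ≤ n) : Ay f i j ≤ Ay f i' j := by
  induction i', hii using Int.leInduction with
  | base => exact le_rfl
  | succ t ht ih =>
    rw [← (edge_sw hf (by omega) hi').2]
    exact (ih (by omega)).trans (edge_ne hf (by omega) (by omega)).2.1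

lemma orbitXY_of_vBase {v w : Vtx} (hv : inGamma n v) (hw : inGamma n w) (h : vBase n v w) :
    OrbitXY δ (f v).1 (f v).2.1 (f w).1 (f w).2.1 ∧ OrbitXY δ (f w).1 (f w).2.1 (f v).1 (f v).2.1 :=
  have he := hf.2.2.2.2.2.1 v w hv hw (.rel _ _ h)
  ⟨orbitXY_of_pEquiv he, orbitXY_of_pEquiv he.symm⟩

lemma orbitXY_rowA_rowB (h : t = s + 2 * n) :
    OrbitXY δ (Ax f 0 s) (Ay f 0 s) (Bx f n t) (By f n t) ∧
      OrbitXY δ (Bx f n t) (By f n t) (Ax f 0 s) (Ay f 0 s) := by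
  subst h
  exact orbitXY_of_vBase hf (by simp [inGamma]) (by simp [inGamma]) (Or.inl ⟨rfl, by simp⟩)

lemma orbitXY_rowB_rowA (h : t = s + n) :
    OrbitXY δ (Bx f n s) (By f n s) (Ax f 0 t) (Ay f 0 t) ∧
      OrbitXY δ (Ax f 0 t) (Ay f 0 t) (Bx f n s) (By f n s) := by
  subst h
  exact orbitXY_of_vBase hf (by simp [inGamma]) (by simp [inGamma])
    (Or.inr ⟨rfl, by simp; ring⟩)

lemma orbitXY_topA_bottomB (h : t = s + n) :
    OrbitXY δ (Ax f n s) (Ay f n s) (Bx f 0 t) (By f 0 t) := by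
  subst h
  exact (orbitXY_of_vBase hf (by simp [inGamma]) (by simp [inGamma])
    (Or.inl ⟨rfl, by simp; ring⟩)).1

variable (hn : 1 ≤ n)
include hn

lemma monotone_Bx_bottom : Monotone (Bx f 0) := by
  refine monotone_int_of_le_succ fun j => ?_
  rw [(edge_se hf le_rfl (by simpa using hn)).1]
  exact (edge_sw hf le_rfl (by simpa using hn)).1

lemma monotone_Ay_top : Monotone (Ay f n) := by
  refine monotone_int_of_le_succ fun j => ?_
  have hsw := (edge_sw hf (i := n - 1) (j := j) (by omega) (by omega)).2
  have hse := (edge_se hf (i := n - 1) (j := j) (by omega) (by omega)).2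
  rw [sub_add_cancel] at hsw hse
  linarith

lemma Bx_top_le_Ax_bottom (h : t ≤ s + n) : Bx f n t ≤ Ax f 0 s := by
  obtain ⟨j, hjt, htj, hjs⟩ : ∃ j, j ≤ t ∧ t - j ≤ n - 1 ∧ j ≤ s + 1 :=
    ⟨min t (s + 1), by omega, by omega, by omega⟩
  have hse := (edge_se hf (i := 0) (j := j - 1) le_rfl (by simpa using hn)).1
  rw [zero_add, sub_add_cancel] at hse
  calc Bx f n t ≤ Ax f n t := (edge_ne hf (by omega) le_rfl).1
    _ ≤ Ax f 1 j := Ax_cone_le hf zero_le_one hjt (by omega) le_rfl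
    _ = Bx f 0 (j - 1) := hse.symm
    _ ≤ Bx f 0 s := monotone_Bx_bottom hf hn (by omega)
    _ ≤ Ax f 0 s := (edge_ne hf le_rfl (by omega)).1

lemma Ay_bottom_le_By_top (h : s ≤ t) : Ay f 0 s ≤ By f n t :=
  calc Ay f 0 s ≤ Ay f n s := Ay_le_up hf le_rfl (by omega) le_rfl
    _ ≤ Ay f n t := monotone_Ay_top hf hn h
    _ ≤ By f n t := (edge_ne hf (by omega) le_rfl).2.1

end Configuration

section Rows

variable {n : ℕ} {δ k : ℝ} {f : Vtx → Pt} {m s : ℤ} (hδ : 0 < δ) (hn : 1 ≤ n)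
  (hf : IsMobius n δ f)
include hδ hn hf

/-- `B̃_{0,m} ∼ Ã_{n,m-n}`, and `WrapEq` fixes the difference of their `x + y`, hence the power
of `T` relating them. -/
lemma Bx_bottom_eq_of_wrapEq (hE : WrapEq n δ f m) : Bx f 0 m = Ay f n (m - n) + δ := by
  have hbot := (edge_ne hf (i := 0) (j := m) le_rfl (by omega)).2.2
  have htop := (edge_ne hf (i := n) (j := m - n) (by omega) le_rfl).2.2
  have hsum : Bx f 0 m + By f 0 m = Ax f n (m - n) + Ay f n (m - n) + 3 * δ := by
    obtain ⟨hE₁, hE₂⟩ := hE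
    linarith
  have := (tImage_of_orbitXY_of_add_eq hδ hsum (orbitXY_topA_bottomB hf (by ring))).2
  linarith

lemma Ay_bottom_add_le_Ax_bottom (hE : WrapEq n δ f m) (h : m ≤ s) :
    Ay f 0 (m - n) + δ ≤ Ax f 0 s :=
  calc Ay f 0 (m - n) + δ ≤ Ay f n (m - n) + δ := by
        linarith [Ay_le_up hf (i := 0) (i' := n) (j := m - n) le_rfl (by omega) le_rfl]
    _ = Bx f 0 m := (Bx_bottom_eq_of_wrapEq hδ hn hf hE).symm
    _ ≤ Bx f 0 s := monotone_Bx_bottom hf hn h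
    _ ≤ Ax f 0 s := (edge_ne hf le_rfl (by omega)).1

lemma rowBSeg_and_wrapEq (hA : RowASeg δ k (Ax f 0 s) (Ay f 0 s))
    (hA₁ : RowASeg δ (k + 1) (Ax f 0 (s + n)) (Ay f 0 (s + n))) :
    RowBSeg δ k (Bx f n s) (By f n s) ∧ WrapEq n δ f (s + n) := by
  have hwx := Bx_top_le_Ax_bottom hf hn (s := s) (t := s) (by omega)
  have hwy := Ay_bottom_le_By_top hf hn (s := s) (t := s) le_rfl
  obtain ⟨hT₁, hT₂⟩ := tImage_of_orbitXY_rowASeg hδ hA₁ (by linarith [hA.1])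
    (by linarith [hA.2.1]) (orbitXY_rowB_rowA hf (s := s) rfl).2
  obtain ⟨hA₁x, hA₁y, hA₁y'⟩ := hA₁
  refine ⟨⟨by linarith, by linarith, by linarith⟩, ?_⟩
  rw [WrapEq, add_sub_cancel_right]
  exact ⟨hT₁, hT₂⟩

lemma rowBSeg_forward (hA₂ : RowASeg δ (k - 2) (Ax f 0 (s - 2 * n)) (Ay f 0 (s - 2 * n)))
    (hA₁ : RowASeg δ (k - 1) (Ax f 0 (s - n)) (Ay f 0 (s - n)))
    (hB₁ : RowBSeg δ (k - 1) (Bx f n (s - n)) (By f n (s - n))) (hE₁ : WrapEq n δ f (s - n)) :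
    RowBSeg δ k (Bx f n s) (By f n s) := by
  have hwx := Bx_top_le_Ax_bottom hf hn (s := s - n) (t := s) (by omega)
  have hwy := Ay_bottom_le_By_top hf hn (s := s - n) (t := s) (by omega)
  rcases tImage_or_eq_of_orbitXY_rowASeg hδ hA₂ (by linarith [hA₁.1]) (by linarith [hA₁.2.1])
    (orbitXY_rowA_rowB hf (by ring)).1 with ⟨hT₁, hT₂⟩ | ⟨hwx', hwy'⟩
  · obtain ⟨hA₂x, hA₂y, hA₂y'⟩ := hA₂
    exact ⟨by linarith, by linarith, by linarith⟩
  -- `B̃_{n,s}` coincides with `Ã_{0,s-2n}`, which leaves no room for `Ã_{0,s}`.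
  exfalso
  have hrx := Ay_bottom_add_le_Ax_bottom hδ hn hf hE₁ (s := s) (by omega)
  rw [show s - n - n = s - 2 * n by ring] at hrx
  have hry := Ay_bottom_le_By_top hf hn (s := s) (t := s) le_rfl
  rcases tImage_or_eq_of_orbitXY_rowBSeg hδ hB₁ (by linarith [hA₂.2.1])
    (by linarith [hA₂.2.2]) (orbitXY_rowB_rowA hf (by ring)).1 with ⟨hT₁, -⟩ | ⟨-, hry'⟩
  · linarith [hB₁.1, hA₂.2.2]
  · linarith [hB₁.2.2, hA₂.2.2]

lemma rowASeg_forward (hA₂ : RowASeg δ (k - 2) (Ax f 0 (s - 2 * n)) (Ay f 0 (s - 2 * n)))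
    (hA₁ : RowASeg δ (k - 1) (Ax f 0 (s - n)) (Ay f 0 (s - n)))
    (hB₁ : RowBSeg δ (k - 1) (Bx f n (s - n)) (By f n (s - n))) (hE₁ : WrapEq n δ f (s - n))
    (hB : RowBSeg δ k (Bx f n s) (By f n s)) :
    RowASeg δ k (Ax f 0 s) (Ay f 0 s) ∧ WrapEq n δ f s := by
  have hrx := Ay_bottom_add_le_Ax_bottom hδ hn hf hE₁ (s := s) (by omega)
  rw [show s - n - n = s - 2 * n by ring] at hrx
  have hry := Ay_bottom_le_By_top hf hn (s := s) (t := s) le_rfl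
  rcases tImage_or_eq_of_orbitXY_rowBSeg hδ hB₁ (by linarith [hA₂.2.1]) (by linarith [hB.2.2])
    (orbitXY_rowB_rowA hf (by ring)).1 with ⟨hT₁, hT₂⟩ | ⟨hrx', hry'⟩
  · obtain ⟨hB₁x, hB₁x', hB₁y⟩ := hB₁
    exact ⟨⟨by linarith, by linarith, by linarith⟩, hT₁, hT₂⟩
  -- `Ã_{0,s}` coincides with `B̃_{n,s-n}`, which leaves no room for `B̃_{n,s+n}`.
  exfalso
  have hwx := Bx_top_le_Ax_bottom hf hn (s := s) (t := s + n) le_rfl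
  have hwy := Ay_bottom_le_By_top hf hn (s := s) (t := s + n) (by omega)
  have := (tImage_of_orbitXY_rowASeg hδ hA₁ (by linarith [hB₁.2.1]) (by linarith [hB₁.2.2])
    (orbitXY_rowA_rowB hf (by ring)).1).2
  linarith [hA₁.1, hB₁.2.2]

lemma rowASeg_backward (hB₁ : RowBSeg δ (k + 1) (Bx f n (s + n)) (By f n (s + n)))
    (hB₂ : RowBSeg δ (k + 2) (Bx f n (s + 2 * n)) (By f n (s + 2 * n))) :
    RowASeg δ k (Ax f 0 s) (Ay f 0 s) := by
  have hrx := Bx_top_le_Ax_bottom hf hn (s := s) (t := s + n) le_rfl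
  have hry := Ay_bottom_le_By_top hf hn (s := s) (t := s + n) (by omega)
  obtain ⟨hT₁, hT₂⟩ := tImage_of_orbitXY_rowBSeg hδ hB₂ (by linarith [hB₁.1])
    (by linarith [hB₁.2.2]) (orbitXY_rowA_rowB hf rfl).2
  obtain ⟨hB₂x, hB₂x', hB₂y⟩ := hB₂
  exact ⟨by linarith, by linarith, by linarith⟩

end Rows

/-- The block `k` of `s`, i.e. `s = k n + r` with `1 ≤ r ≤ n`. -/
def block (n : ℕ) (s : ℤ) : ℤ := (s - 1) / n

lemma block_eq {n : ℕ} {s k : ℤ} (h₁ : k * n + 1 ≤ s) (h₂ : s ≤ k * n + n) : block n s = k :=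
  (Int.ediv_eq_iff_of_pos (by omega)).2 ⟨by omega, by omega⟩

lemma cast_block_of_eq_add_mul {n : ℕ} (hn : 1 ≤ n) {s s' : ℤ} (t : ℤ) (h : s' = s + t * n) :
    (block n s' : ℝ) = block n s + t := by
  rw [block, block, h, show s + t * n - 1 = s - 1 + t * n by ring,
    Int.add_mul_ediv_right _ _ (by omega)]
  push_cast
  ring

def Window (n : ℕ) (δ : ℝ) (f : Vtx → Pt) (lo hi : ℤ) : Prop :=
  ∀ s, lo ≤ s → s ≤ hi →
    RowASeg δ (block n s) (Ax f 0 s) (Ay f 0 s) ∧ RowBSeg δ (block n s) (Bx f n s) (By f n s) ∧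
      (lo + n ≤ s → WrapEq n δ f s)

lemma rowASeg_of_boundary {n : ℕ} {δ : ℝ} {f : Vtx → Pt} (hf : IsMobius n δ f) {s : ℤ}
    (h₁ : 1 ≤ s) (h₃ : s ≤ 3 * n) :
    RowASeg δ (block n s) (Ax f 0 s) (Ay f 0 s) := by
  obtain ⟨-, -, hM₁, hM₂, hM₃, -⟩ := hf
  unfold Ax Ay
  rcases (show s ≤ n ∨ n < s ∧ s ≤ 2 * n ∨ 2 * n < s by omega) with h | ⟨h, h'⟩ | h
  · obtain ⟨ξ, hξ₁, hξ₂, hfs⟩ := hM₁ s h₁ h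
    rw [block_eq (k := 0) (by omega) (by omega), hfs]
    exact ⟨by norm_num, by norm_num; linarith, by norm_num; linarith⟩
  · obtain ⟨ξ, hξ₁, hξ₂, hfs⟩ := hM₂ s (by omega) h'
    rw [block_eq (k := 1) (by omega) (by omega), hfs]
    exact ⟨by norm_num, by norm_num; linarith, by norm_num; linarith⟩
  · obtain ⟨ξ, hξ₁, hξ₂, hfs⟩ := hM₃ s (by omega) h₃
    rw [block_eq (k := 2) (by omega) (by omega), hfs]
    exact ⟨by norm_num, by norm_num; linarith, by norm_num; linarith⟩

section Windows

variable {n : ℕ} {δ : ℝ} {f : Vtx → Pt} {lo hi : ℤ} (hδ : 0 < δ) (hn : 1 ≤ n)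
  (hf : IsMobius n δ f)
include hδ hn hf

lemma window_base : Window n δ f 1 (2 * n) := by
  intro s h₁ h₂
  have hk : (block n (s + n) : ℝ) = block n s + 1 := by
    simpa using cast_block_of_eq_add_mul hn (s := s) 1 (by ring)
  have hBE := rowBSeg_and_wrapEq hδ hn hf (rowASeg_of_boundary hf h₁ (by omega))
    (hk ▸ rowASeg_of_boundary hf (s := s + n) (by omega) (by omega))
  refine ⟨rowASeg_of_boundary hf h₁ (by omega), hBE.1, fun h => ?_⟩
  have hk' : (block n (s - n + n) : ℝ) = block n (s - n) + 1 := by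
    simpa using cast_block_of_eq_add_mul hn (s := s - n) 1 (by ring)
  have := (rowBSeg_and_wrapEq hδ hn hf (rowASeg_of_boundary hf (s := s - n) (by omega) (by omega))
    (hk' ▸ rowASeg_of_boundary hf (s := s - n + n) (by omega) (by omega))).2
  rwa [sub_add_cancel] at this

lemma window_succ (hlen : lo + 2 * n ≤ hi + 1) (hw : Window n δ f lo hi) :
    Window n δ f lo (hi + 1) := by
  set s := hi + 1
  have hk₁ : (block n (s - n) : ℝ) = block n s - 1 := by
    rw [cast_block_of_eq_add_mul hn (s := s) (-1) (by ring)]; push_cast; ring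
  have hk₂ : (block n (s - 2 * n) : ℝ) = block n s - 2 := by
    rw [cast_block_of_eq_add_mul hn (s := s) (-2) (by ring)]; push_cast; ring
  obtain ⟨hA₁, hB₁, hE₁⟩ := hw (s - n) (by omega) (by omega)
  obtain ⟨hA₂, -, -⟩ := hw (s - 2 * n) (by omega) (by omega)
  rw [hk₁] at hA₁ hB₁
  rw [hk₂] at hA₂
  have hB := rowBSeg_forward hδ hn hf hA₂ hA₁ hB₁ (hE₁ (by omega))
  have hAE := rowASeg_forward hδ hn hf hA₂ hA₁ hB₁ (hE₁ (by omega)) hB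
  intro t ht₁ ht₂
  rcases (show t ≤ hi ∨ t = s by omega) with ht | rfl
  · exact hw t ht₁ ht
  · exact ⟨hAE.1, hB, fun _ => hAE.2⟩

lemma window_pred (hlen : lo + 2 * n ≤ hi + 1) (hw : Window n δ f lo hi) :
    Window n δ f (lo - 1) hi := by
  set s := lo - 1
  have hk₁ : (block n (s + n) : ℝ) = block n s + 1 := by
    simpa using cast_block_of_eq_add_mul hn (s := s) 1 (by ring)
  have hk₂ : (block n (s + 2 * n) : ℝ) = block n s + 2 := by
    rw [cast_block_of_eq_add_mul hn (s := s) 2 (by ring)]; push_cast; ring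
  obtain ⟨hA₁, hB₁, -⟩ := hw (s + n) (by omega) (by omega)
  obtain ⟨-, hB₂, -⟩ := hw (s + 2 * n) (by omega) (by omega)
  rw [hk₁] at hA₁ hB₁
  rw [hk₂] at hB₂
  have hA := rowASeg_backward hδ hn hf hB₁ hB₂
  have hBE := rowBSeg_and_wrapEq hδ hn hf hA hA₁
  intro t ht₁ ht₂
  rcases (show t = s ∨ lo ≤ t by omega) with rfl | ht
  · exact ⟨hA, hBE.1, fun _ => by omega⟩
  · refine ⟨(hw t ht ht₂).1, (hw t ht ht₂).2.1, fun h => ?_⟩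
    rcases (show t = s + n ∨ lo + n ≤ t by omega) with rfl | h'
    · exact hBE.2
    · exact (hw t ht ht₂).2.2 h'

lemma window_grow (d : ℕ) : Window n δ f (1 - d) (2 * n + d) := by
  induction d with
  | zero => simpa using window_base hδ hn hf
  | succ d ih =>
    have := window_pred hδ hn hf (by omega) (window_succ hδ hn hf (by omega) ih)
    rwa [show (1 : ℤ) - d - 1 = 1 - (d + 1 : ℕ) by push_cast; ring, add_assoc] at this

lemma rowASeg_and_rowBSeg (s : ℤ) :
    RowASeg δ (block n s) (Ax f 0 s) (Ay f 0 s) ∧ RowBSeg δ (block n s) (Bx f n s) (By f n s) :=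
  have h := window_grow hδ hn hf (s.natAbs + 2 * n) s (by omega) (by omega)
  ⟨h.1, h.2.1⟩

end Windows

def InSquare (δ a b x y : ℝ) : Prop :=
  (a - 3) * δ ≤ x ∧ x ≤ (a - 2) * δ ∧ (b - 3) * δ ≤ y ∧ y ≤ (b - 2) * δ

section Vertices

variable {n : ℕ} {δ : ℝ} {f : Vtx → Pt} {i j : ℤ} (hδ : 0 < δ) (hn : 1 ≤ n)
  (hf : IsMobius n δ f)
include hδ hn hf

lemma inSquare_Ax_Ay (hi₀ : 0 ≤ i) (hin : i ≤ n) :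
    InSquare δ (block n (j - i)) (block n j) (Ax f i j) (Ay f i j) := by
  have hk : (block n (j - i + n) : ℝ) = block n (j - i) + 1 := by
    simpa using cast_block_of_eq_add_mul hn (s := j - i) 1 (by ring)
  obtain ⟨hA, -⟩ := rowASeg_and_rowBSeg hδ hn hf (j - i)
  obtain ⟨-, hB⟩ := rowASeg_and_rowBSeg hδ hn hf (j - i + n)
  obtain ⟨hA', hB'⟩ := rowASeg_and_rowBSeg hδ hn hf j
  rw [hk] at hB
  have hx₁ : Ax f n (j - i + n) ≤ Ax f i j := Ax_cone_le hf hi₀ (by omega) (by omega) le_rfl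
  have hx₂ := (edge_ne hf (i := n) (j := j - i + n) (by omega) le_rfl).1
  have hx₃ : Ax f i j ≤ Ax f 0 (j - i) := Ax_cone_le hf le_rfl (by omega) (by omega) hin
  have hy₁ := Ay_le_up hf (j := j) le_rfl hi₀ hin
  have hy₂ := Ay_le_up hf (j := j) hi₀ hin le_rfl
  have hy₃ := (edge_ne hf (i := n) (j := j) (by omega) le_rfl).2.1
  exact ⟨by linarith [hB.1], by linarith [hA.1], by linarith [hA'.2.1], by linarith [hB'.2.2]⟩

lemma inSquare_Bx_By (hi₀ : 0 ≤ i) (hin : i ≤ n) :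
    InSquare δ (block n (j - i)) (block n j) (Bx f i j) (By f i j) := by
  rcases hin.lt_or_eq with hin | rfl
  · have hx := inSquare_Ax_Ay hδ hn hf (i := i + 1) (j := j + 1) (by omega) hin
    have hy := inSquare_Ax_Ay hδ hn hf (i := i + 1) (j := j) (by omega) hin
    rw [show j + 1 - (i + 1) = j - i by ring] at hx
    rw [(edge_se hf hi₀ hin).1, (edge_sw hf hi₀ hin).2]
    exact ⟨hx.1, hx.2.1, hy.2.2⟩
  · have hk : (block n (j - n) : ℝ) = block n j - 1 := by
      rw [cast_block_of_eq_add_mul hn (s := j) (-1) (by ring)]; push_cast; ring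
    obtain ⟨hB₁, hB₂, hB₃⟩ := (rowASeg_and_rowBSeg hδ hn hf j).2
    rw [hk]
    exact ⟨by linarith, by linarith, by linarith, by linarith⟩

end Vertices

lemma dreg_of_inSquare {δ : ℝ} {k : ℤ} {p : Pt} (hp : planeB p) (h : InSquare δ k k p.1 p.2.1) :
    Dreg δ (2 * k - 4) p := by
  obtain ⟨h₁, h₂, h₃, h₄⟩ := h
  exact ⟨hp, k - 2, Or.inl ⟨by ring, by push_cast; linarith, by push_cast; linarith,
    by push_cast; linarith, by push_cast; linarith⟩⟩

lemma dreg_of_inSquare_sub_one {δ : ℝ} {k : ℤ} {p : Pt} (hp : planeB p)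
    (h : InSquare δ (k - 1) k p.1 p.2.1) : Dreg δ (2 * k - 5) p := by
  obtain ⟨h₁, h₂, h₃, h₄⟩ := h
  exact ⟨hp, k - 3, Or.inr ⟨by ring, by push_cast; linarith, by push_cast; linarith,
    by push_cast; linarith, by push_cast; linarith⟩⟩

end MobiusHoneycomb

open MobiusHoneycomb

/-- **Lemma 3.1**: let `Ã_{i,j}, B̃_{i,j}` be vertices of `Γ̃_n` and write
`j = kn + r` with `1 ≤ r ≤ n`.  Then every `h̃ ∈ MÖBIUS(τ̃_n, δ)` maps
`Ã_{i,j}, B̃_{i,j}` into `D_δ^{(2k-4)}` if `r > i`, and into `D_δ^{(2k-5)}` if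
`r ≤ i`. -/
theorem mobius_vertex_region (n : ℕ) (δ : ℕ) (hδ : 0 < δ)
    (f : Vtx → Pt) (hf : IsMobius n (δ : ℝ) f)
    (i j k r : ℤ) (hi0 : 0 ≤ i) (hin : i ≤ (n : ℤ))
    (hj : j = k * (n : ℤ) + r) (hr1 : 1 ≤ r) (hrn : r ≤ (n : ℤ)) :
    (i < r →
      Dreg (δ : ℝ) (2 * k - 4) (f ⟨VK.A, i, j⟩) ∧
      Dreg (δ : ℝ) (2 * k - 4) (f ⟨VK.B, i, j⟩)) ∧
    (r ≤ i →
      Dreg (δ : ℝ) (2 * k - 5) (f ⟨VK.A, i, j⟩) ∧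
      Dreg (δ : ℝ) (2 * k - 5) (f ⟨VK.B, i, j⟩)) := by
  have hn : 1 ≤ n := by omega
  have hδ' : (0 : ℝ) < δ := by exact_mod_cast hδ
  have hA := inSquare_Ax_Ay hδ' hn hf (j := j) hi0 hin
  have hB := inSquare_Bx_By hδ' hn hf (j := j) hi0 hin
  rw [block_eq (s := j) (k := k) (by omega) (by omega)] at hA hB
  have hpA : planeB (f ⟨VK.A, i, j⟩) := hf.1 _ ⟨hi0, hin⟩
  have hpB : planeB (f ⟨VK.B, i, j⟩) := hf.1 _ ⟨hi0, hin⟩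
  refine ⟨fun hir => ?_, fun hir => ?_⟩
  · rw [block_eq (s := j - i) (k := k) (by omega) (by omega)] at hA hB
    exact ⟨dreg_of_inSquare hpA hA, dreg_of_inSquare hpB hB⟩
  · have hk : (block n (j - i) : ℝ) = k - 1 := by
      rw [block_eq (s := j - i) (k := k - 1) (by linarith) (by linarith)]
      push_cast; ring
    rw [hk] at hA hB
    exact ⟨dreg_of_inSquare_sub_one hpA hA, dreg_of_inSquare_sub_one hpB hB⟩
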